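/- For the Helmholtz oscillator y'' = -c·y² + a·y' - (6/25)·a²·y, the function I(x,y,z) = (12a²y² + 50cy³ - 60ayz + 75z²)·e^{-(6a/5)x} satisfies ∂ₓI + z·∂_yI + (-cy² + az - (6/25)a²y)·∂_zI = 0 identically on ℝ³. -/

import Mathlib

noncomputable def pdx (F : ℝ × ℝ × ℝ → ℝ) (p : ℝ × ℝ × ℝ) : ℝ :=
  deriv (fun t => F (t, p.2.1, p.2.2)) p.1

noncomputable def pdy (F : ℝ × ℝ × ℝ → ℝ) (p : ℝ × ℝ × ℝ) : ℝ :=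
  deriv (fun t => F (p.1, t, p.2.2)) p.2.1

noncomputable def pdz (F : ℝ × ℝ × ℝ → ℝ) (p : ℝ × ℝ × ℝ) : ℝ :=
  deriv (fun t => F (p.1, p.2.1, t)) p.2.2

/-- The Cartan vector field `D = ∂ₓ + z ∂_y + φ ∂_z` of `y'' = φ(x,y,y')`. -/
noncomputable def Dtot (φ F : ℝ × ℝ × ℝ → ℝ) (p : ℝ × ℝ × ℝ) : ℝ :=
  pdx F p + p.2.2 * pdy F p + φ p * pdz F p

/-- Evaluation of a polynomial in three variables at a point of ℝ³. -/
noncomputable def mev (P : MvPolynomial (Fin 3) ℝ) (p : ℝ × ℝ × ℝ) : ℝ :=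
  MvPolynomial.eval ![p.1, p.2.1, p.2.2] P

/-!
Writing `I = Q(y, z) · e^{λx}` with `λ = -6a/5` (the `l` below), the Leibniz rule gives
`D I = (λ Q + z ∂_y Q + φ ∂_z Q) · e^{λx}`, and for the quadratic-cubic `Q` of the statement the
bracket vanishes identically as a polynomial in `a, c, y, z`.
-/

open Real

theorem Dtot_mul_exp (φ : ℝ × ℝ × ℝ → ℝ) (Q : ℝ → ℝ → ℝ) (l : ℝ) {p : ℝ × ℝ × ℝ} {Qy Qz : ℝ}
    (hy : HasDerivAt (fun t => Q t p.2.2) Qy p.2.1) (hz : HasDerivAt (Q p.2.1) Qz p.2.2) :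
    Dtot φ (fun q => Q q.2.1 q.2.2 * exp (l * q.1)) p
      = (l * Q p.2.1 p.2.2 + p.2.2 * Qy + φ p * Qz) * exp (l * p.1) := by
  have hx : HasDerivAt (fun t => Q p.2.1 p.2.2 * exp (l * t))
      (Q p.2.1 p.2.2 * (exp (l * p.1) * l)) p.1 :=
    (((hasDerivAt_id p.1).const_mul l).exp.congr_deriv (by simp)).const_mul _
  simp only [Dtot, pdx, pdy, pdz]
  rw [hx.deriv, (hy.mul_const _).deriv, (hz.mul_const _).deriv]
  ring

/-- First integral of the Helmholtz oscillator with friction, case b = -(6/25)a². -/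
theorem helmholtz_case2 (a c : ℝ) :
    ∀ p : ℝ × ℝ × ℝ,
      Dtot (fun q => -c * q.2.1 ^ 2 + a * q.2.2 - (6 / 25) * a ^ 2 * q.2.1)
        (fun q => (12 * a ^ 2 * q.2.1 ^ 2 + 50 * c * q.2.1 ^ 3
            - 60 * a * q.2.1 * q.2.2 + 75 * q.2.2 ^ 2)
          * Real.exp (-(6 * a / 5) * q.1)) p = 0 := by
  rintro ⟨x, y, z⟩
  have hy : HasDerivAt (fun t => 12 * a ^ 2 * t ^ 2 + 50 * c * t ^ 3 - 60 * a * t * z + 75 * z ^ 2)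
      (12 * a ^ 2 * (2 * y) + 50 * c * (3 * y ^ 2) - 60 * a * z) y := by
    have := ((((hasDerivAt_pow 2 y).const_mul (12 * a ^ 2)).add
      ((hasDerivAt_pow 3 y).const_mul (50 * c))).sub
      (((hasDerivAt_id y).const_mul (60 * a)).mul_const z)).add_const (75 * z ^ 2)
    exact this.congr_deriv (by simp)
  have hz : HasDerivAt (fun t => 12 * a ^ 2 * y ^ 2 + 50 * c * y ^ 3 - 60 * a * y * t + 75 * t ^ 2)
      (-(60 * a * y) + 75 * (2 * z)) z := by
    have := (((hasDerivAt_id z).const_mul (60 * a * y)).const_sub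
      (12 * a ^ 2 * y ^ 2 + 50 * c * y ^ 3)).add ((hasDerivAt_pow 2 z).const_mul 75)
    exact this.congr_deriv (by simp)
  rw [Dtot_mul_exp _ (fun y z => 12 * a ^ 2 * y ^ 2 + 50 * c * y ^ 3 - 60 * a * y * z
    + 75 * z ^ 2) _ hy hz]
  ring
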